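/- arXiv:1706.04247 — 2 statements merged into one kernel-verified Lean document; each statement's English description precedes it below -/
import Mathlib

section
/- Let G be a GFP sequence of Fibonacci type with gcd(d, g) a unit, and let m ≥ 1 and n ≥ 2. Then gcd(a₁, b₃) · gcd(b₁, a₃) is associated to c · G(2)^e, where c = G(m+1)·G(n−1) is the interior point of the star of David and e is the number of even integers among m and n (so the product equals c, c·G(2), or c·G(2)² according as neither, exactly one, or both of m, n are even). -/
/-!
Consecutive terms of a Fibonacci-type sequence are coprime, and since `G (k + 2) ≡ g G k mod d`
with `gcd d g = 1`, `gcd (G k) d` is `d` for even `k` and `1` for odd `k`. Hence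
`gcd (G k) (G (k + 2)) = gcd (G k) (d G (k + 1) + g G k) = gcd (G k) d` is `G 2 = d` or `1`
according to the parity of `k`. Each of the two gcds of the star is a common factor times such
a gcd, and the two common factors multiply to the interior point `G (m + 1) G (n - 1)`.
-/

section GCD

variable {R : Type*} [CommRing R] [GCDMonoid R]

theorem gcd_add_mul_right_right' (a b c : R) : Associated (gcd a (b + c * a)) (gcd a b) :=
  associated_of_dvd_dvd
    (dvd_gcd (gcd_dvd_left _ _) <| by
      simpa using dvd_sub (gcd_dvd_right a (b + c * a)) ((gcd_dvd_left a _).mul_left c))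
    (dvd_gcd (gcd_dvd_left _ _) (dvd_add (gcd_dvd_right a b) ((gcd_dvd_left a b).mul_left c)))

theorem IsRelPrime.gcd_mul_right_cancel_right {k m : R} (h : IsRelPrime k m) (n : R) :
    Associated (gcd k (n * m)) (gcd k n) :=
  associated_of_dvd_dvd
    (dvd_gcd (gcd_dvd_left _ _) <|
      (h.of_dvd_left (gcd_dvd_left k _)).dvd_of_dvd_mul_right (gcd_dvd_right _ _))
    (dvd_gcd (gcd_dvd_left _ _) ((gcd_dvd_right k n).mul_right m))

end GCD

structure IsFibonacciType {R : Type*} [CommRing R] (d g : R) (G : ℕ → R) : Prop where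
  zero : G 0 = 0
  one : G 1 = 1
  add_two : ∀ k, G (k + 2) = d * G (k + 1) + g * G k

namespace IsFibonacciType

variable {R : Type*} [CommRing R] {d g : R} {G : ℕ → R}

theorem dvd_two_mul (hG : IsFibonacciType d g G) (j : ℕ) : d ∣ G (2 * j) := by
  induction j with
  | zero => simp [hG.zero]
  | succ j ih =>
    rw [mul_add_one, hG.add_two]
    exact dvd_add (dvd_mul_right d _) (ih.mul_left g)

section DecompositionMonoid

variable [DecompositionMonoid R]

theorem isRelPrime_succ_g (hG : IsFibonacciType d g G) (hdg : IsRelPrime d g) (k : ℕ) :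
    IsRelPrime (G (k + 1)) g := by
  induction k with
  | zero => simpa [hG.one] using isRelPrime_one_left
  | succ k ih =>
    rw [hG.add_two]
    exact (hdg.mul_left ih).add_mul_left_left (G k)

theorem isRelPrime_succ (hG : IsFibonacciType d g G) (hdg : IsRelPrime d g) (k : ℕ) :
    IsRelPrime (G k) (G (k + 1)) := by
  induction k with
  | zero => simpa [hG.zero, hG.one] using isRelPrime_one_right
  | succ k ih =>
    rw [hG.add_two]
    exact ((hG.isRelPrime_succ_g hdg k).mul_right ih.symm).mul_add_right_right d

theorem isRelPrime_two_mul_add_one (hG : IsFibonacciType d g G) (hdg : IsRelPrime d g) (j : ℕ) :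
    IsRelPrime (G (2 * j + 1)) d := by
  induction j with
  | zero => simpa [hG.one] using isRelPrime_one_left
  | succ j ih =>
    rw [show 2 * (j + 1) + 1 = 2 * j + 1 + 2 by ring, hG.add_two]
    exact (hdg.symm.mul_left ih).mul_add_left_left _

end DecompositionMonoid

variable [GCDMonoid R]

theorem gcd_d_associated (hG : IsFibonacciType d g G) (hdg : IsRelPrime d g) (k : ℕ) :
    Associated (gcd (G k) d) (d ^ if Even k then 1 else 0) := by
  obtain ⟨j, rfl | rfl⟩ := Nat.even_or_odd' k
  · simpa using (associated_gcd_right_iff.mpr (hG.dvd_two_mul j)).symm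
  · have hodd : ¬Even (2 * j + 1) := Nat.not_even_iff_odd.mpr (odd_two_mul_add_one j)
    simpa [hodd] using gcd_isUnit_iff_isRelPrime.mpr (hG.isRelPrime_two_mul_add_one hdg j)

theorem gcd_add_two_associated (hG : IsFibonacciType d g G) (hdg : IsRelPrime d g) (k : ℕ) :
    Associated (gcd (G k) (G (k + 2))) (d ^ if Even k then 1 else 0) :=
  calc gcd (G k) (G (k + 2))
      = gcd (G k) (d * G (k + 1) + g * G k) := by rw [hG.add_two]
    Associated _ (gcd (G k) (d * G (k + 1))) := gcd_add_mul_right_right' _ _ _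
    Associated _ (gcd (G k) d) := (hG.isRelPrime_succ hdg k).gcd_mul_right_cancel_right d
    Associated _ (d ^ if Even k then 1 else 0) := hG.gcd_d_associated hdg k

end IsFibonacciType

theorem star_of_david_interior_point_general (d g : Polynomial ℤ)
    (G : ℕ → Polynomial ℤ) (h0 : G 0 = 0) (h1 : G 1 = 1)
    (hrec : ∀ n : ℕ, 2 ≤ n → G n = d * G (n - 1) + g * G (n - 2))
    (hdg : IsUnit (gcd d g))
    (m n : ℕ) (hn : 2 ≤ n) :
    Associated
      (gcd (G (m + 1) * G (n - 2)) (G (m + 1) * G n) *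
        gcd (G m * G (n - 1)) (G (m + 2) * G (n - 1)))
      (G (m + 1) * G (n - 1) *
        G 2 ^ ((if Even m then 1 else 0) + (if Even n then 1 else 0))) := by
  have hG : IsFibonacciType d g G := ⟨h0, h1, fun k ↦ hrec (k + 2) (by omega)⟩
  have hdg' : IsRelPrime d g := gcd_isUnit_iff_isRelPrime.mp hdg
  obtain ⟨k, rfl⟩ : ∃ k, n = k + 2 := ⟨n - 2, by omega⟩
  have hG2 : G 2 = d := by simpa [h0, h1] using hG.add_two 0
  rw [show k + 2 - 1 = k + 1 by omega, Nat.add_sub_cancel, hG2]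
  simp only [Nat.even_add, even_two, iff_true]
  have hk := (gcd_mul_left' (G (m + 1)) (G k) (G (k + 2))).trans
    (.mul_left _ (hG.gcd_add_two_associated hdg' k))
  have hm := (gcd_mul_right' (G (k + 1)) (G m) (G (m + 2))).trans
    (.mul_right (hG.gcd_add_two_associated hdg' m) _)
  exact (hk.mul_mul hm).trans (.of_eq (by ring))

theorem star_of_david_interior_point (d g : Polynomial ℤ) (hd : d ≠ 0) (hg : g ≠ 0)
    (G : ℕ → Polynomial ℤ) (h0 : G 0 = 0) (h1 : G 1 = 1)
    (hrec : ∀ n : ℕ, 2 ≤ n → G n = d * G (n - 1) + g * G (n - 2))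
    (hdg : IsUnit (gcd d g))
    (m n : ℕ) (hm : 1 ≤ m) (hn : 2 ≤ n) :
    Associated
      (gcd (G (m + 1) * G (n - 2)) (G (m + 1) * G n) *
        gcd (G m * G (n - 1)) (G (m + 2) * G (n - 1)))
      (G (m + 1) * G (n - 1) *
        G 2 ^ ((if Even m then 1 else 0) + (if Even n then 1 else 0))) :=
  star_of_david_interior_point_general d g G h0 h1 hrec hdg m n hn
end

section
/- For every integer n ≥ 1, the formal derivative of the n-th Fibonacci polynomial satisfies F(n)'(x) = Σ_{k=1}^{n−1} F(k)(x)·F(n−k)(x); that is, the derivative of the first point of the n-th row of the Hosoya triangle of Fibonacci polynomials equals the sum of all points of the (n−1)-th row. Moreover F(n)(0) = 1 if n is odd and F(n)(0) = 0 if n is even, so F(n) is the antiderivative of Σ_{k=1}^{n−1} F(k)·F(n−k) with constant of integration 1 when n is odd and 0 when n is even. -/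
/-!
Differentiating `F (n+2) = x F (n+1) + F n` shows that `F'` satisfies the inhomogeneous
recurrence `u (n+2) = F (n+1) + x u (n+1) + u n` with `u 0 = u 1 = 0`. Splitting off the
boundary terms of the convolution `∑_{i+j=n} F i F j` and applying the recurrence to its
second factor shows that the convolution satisfies the same recurrence with the same initial
values; the terms with `i = 0` or `j = 0` vanish, leaving the sum over `1 ≤ k ≤ n - 1`.
At `x = 0` the recurrence becomes `F (n+2) (0) = F n (0)`, whence the parity pattern.
-/

open Polynomial Finset

/-- The Fibonacci polynomials: `F 0 = 0`, `F 1 = 1`, `F (n+2) = x * F (n+1) + F n`. -/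
noncomputable def fibPoly : ℕ → Polynomial ℤ
  | 0 => 0
  | 1 => 1
  | n + 2 => X * fibPoly (n + 1) + fibPoly n

theorem sum_antidiagonal_mul_add_two_of_recurrence {R : Type*} [CommSemiring R] {a : R}
    {f : ℕ → R} (h0 : f 0 = 0) (h1 : f 1 = 1) (hrec : ∀ n, f (n + 2) = a * f (n + 1) + f n) (n : ℕ) :
    ∑ p ∈ antidiagonal (n + 2), f p.1 * f p.2 =
      f (n + 1) + a * ∑ p ∈ antidiagonal (n + 1), f p.1 * f p.2 +
        ∑ p ∈ antidiagonal n, f p.1 * f p.2 := by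
  simp only [Nat.sum_antidiagonal_succ', h0, h1, hrec, mul_zero, zero_add, mul_one, mul_add,
    sum_add_distrib, mul_sum, mul_left_comm, add_assoc]

@[simp]
theorem fibPoly_zero : fibPoly 0 = 0 := rfl

@[simp]
theorem fibPoly_one : fibPoly 1 = 1 := rfl

theorem fibPoly_add_two (n : ℕ) : fibPoly (n + 2) = X * fibPoly (n + 1) + fibPoly n := rfl

theorem derivative_fibPoly_add_two (n : ℕ) :
    derivative (fibPoly (n + 2)) =
      fibPoly (n + 1) + X * derivative (fibPoly (n + 1)) + derivative (fibPoly n) := by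
  rw [fibPoly_add_two, derivative_add, derivative_mul, derivative_X, one_mul]

theorem derivative_fibPoly_eq_sum_antidiagonal :
    ∀ n, derivative (fibPoly n) = ∑ p ∈ antidiagonal n, fibPoly p.1 * fibPoly p.2
  | 0 => by simp
  | 1 => by simp [Nat.antidiagonal_succ]
  | n + 2 => by
    rw [derivative_fibPoly_add_two, derivative_fibPoly_eq_sum_antidiagonal (n + 1),
      derivative_fibPoly_eq_sum_antidiagonal n,
      sum_antidiagonal_mul_add_two_of_recurrence fibPoly_zero fibPoly_one fibPoly_add_two]

theorem sum_antidiagonal_fibPoly_mul_eq_sum_Icc (n : ℕ) :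
    ∑ p ∈ antidiagonal n, fibPoly p.1 * fibPoly p.2 =
      ∑ k ∈ Icc 1 (n - 1), fibPoly k * fibPoly (n - k) := by
  rw [Nat.sum_antidiagonal_eq_sum_range_succ_mk]
  refine (sum_subset (fun k hk => ?_) fun k _ hk => ?_).symm
  · simp only [mem_Icc, mem_range] at hk ⊢
    omega
  · obtain h | h : k = 0 ∨ n - k = 0 := by simp only [mem_Icc] at hk; omega
    all_goals simp [h]

theorem fibPoly_eval_zero : ∀ n, (fibPoly n).eval 0 = if Odd n then 1 else 0
  | 0 => by simp
  | 1 => by simp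
  | n + 2 => by
    simp [fibPoly_add_two, fibPoly_eval_zero n, Nat.odd_add_one]

theorem fibPoly_derivative_eq_row_sum_general (n : ℕ) :
    derivative (fibPoly n) = ∑ k ∈ Finset.Icc 1 (n - 1), fibPoly k * fibPoly (n - k) ∧
    (fibPoly n).eval 0 = if Odd n then 1 else 0 :=
  ⟨(derivative_fibPoly_eq_sum_antidiagonal n).trans (sum_antidiagonal_fibPoly_mul_eq_sum_Icc n),
    fibPoly_eval_zero n⟩

theorem fibPoly_derivative_eq_row_sum (n : ℕ) (hn : 1 ≤ n) :
    derivative (fibPoly n) = ∑ k ∈ Finset.Icc 1 (n - 1), fibPoly k * fibPoly (n - k) ∧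
    (fibPoly n).eval 0 = if Odd n then 1 else 0 :=
  fibPoly_derivative_eq_row_sum_general n
end
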